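/- arXiv:2307.12821 — 10 statements merged into one kernel-verified Lean document; each statement's English description precedes it below -/
import Mathlib

section
/- Fix k > 0. For every c > 3k there exists an infinitely differentiable function ψ : ℝ → ℝ such that: (i) ψ satisfies the first-order invariant (ψ'(x))² = ψ(x)² · (c − 3k − ψ(x))/(c − k − ψ(x)) for all x ∈ ℝ; (ii) ψ(x) > 0 for all x ∈ ℝ; (iii) ψ is even, ψ(0) = c − 3k = max_{x∈ℝ} ψ(x), and ψ is strictly decreasing on (0, ∞); (iv) ψ decays exponentially: there exist constants C > 0 and δ > 0 with ψ(x) ≤ C e^{−δ|x|} for all x ∈ ℝ. -/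
open Set Filter Real
open scoped Topology ContDiff

noncomputable def Xf (r y : ℝ) : ℝ :=
  r * (Real.log (1 + r * y) - Real.log (1 - r * y))
    - (Real.log (1 + y) - Real.log (1 - y))

lemma Xf_odd (r y : ℝ) : Xf r (-y) = - Xf r y := by
  unfold Xf
  rw [show 1 + r * -y = 1 - r * y by ring, show 1 - r * -y = 1 + r * y by ring,
    show 1 + -y = 1 - y by ring, show (1 : ℝ) - -y = 1 + y by ring]
  ring

lemma Xf_zero (r : ℝ) : Xf r 0 = 0 := by simp [Xf]

section

variable {r : ℝ}

lemma Xf_facts (hr : 1 < r) {y : ℝ} (hy : |y| < 1/r) :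
    0 < 1 + r * y ∧ 0 < 1 - r * y ∧ 0 < 1 + y ∧ 0 < 1 - y ∧
    0 < 1 - r^2 * y^2 ∧ 0 < 1 - y^2 := by
  have hr0 : 0 < r := lt_trans one_pos hr
  rw [abs_lt] at hy
  obtain ⟨h1, h2⟩ := hy
  have hinv : r * (1/r) = 1 := by field_simp
  have hry1 : r * y < 1 := by
    have := (mul_lt_mul_iff_right₀ hr0).2 h2
    rwa [hinv] at this
  have hry2 : -1 < r * y := by
    have := (mul_lt_mul_iff_right₀ hr0).2 h1
    rw [mul_neg, hinv] at this
    linarith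
  have hr1 : 1/r < 1 := by
    rw [div_lt_one hr0]; exact hr
  have hy1 : y < 1 := by linarith
  have hy2 : -1 < y := by linarith
  refine ⟨by linarith, by linarith, by linarith, by linarith, ?_, ?_⟩ <;> nlinarith

lemma Xf_hasDerivAt (hr : 1 < r) {y : ℝ} (hy : |y| < 1/r) :
    HasDerivAt (Xf r) (2 * (r^2 - 1) / ((1 - r^2 * y^2) * (1 - y^2))) y := by
  obtain ⟨h1, h2, h3, h4, h5, h6⟩ := Xf_facts hr hy
  have d1 : HasDerivAt (fun y : ℝ => 1 + r * y) r y := by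
    simpa using ((hasDerivAt_id y).const_mul r).const_add 1
  have d2 : HasDerivAt (fun y : ℝ => 1 - r * y) (-r) y := by
    simpa using ((hasDerivAt_id y).const_mul r).const_sub 1
  have d3 : HasDerivAt (fun y : ℝ => 1 + y) 1 y := by
    simpa using (hasDerivAt_id y).const_add 1
  have d4 : HasDerivAt (fun y : ℝ => 1 - y) (-1) y := by
    simpa using (hasDerivAt_id y).const_sub 1
  have l1 := d1.log (ne_of_gt h1)
  have l2 := d2.log (ne_of_gt h2)
  have l3 := d3.log (ne_of_gt h3)
  have l4 := d4.log (ne_of_gt h4)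
  have := (((l1.sub l2).const_mul r).sub (l3.sub l4))
  convert this using 1
  · rfl
  · rfl
  · rfl
  field_simp
  ring

lemma Xf_contDiffAt (hr : 1 < r) {y : ℝ} (hy : |y| < 1/r) :
    ContDiffAt ℝ ω (Xf r) y := by
  obtain ⟨h1, h2, h3, h4, h5, h6⟩ := Xf_facts hr hy
  have c1 : ContDiffAt ℝ ω (fun y : ℝ => 1 + r * y) y := by fun_prop
  have c2 : ContDiffAt ℝ ω (fun y : ℝ => 1 - r * y) y := by fun_prop
  have c3 : ContDiffAt ℝ ω (fun y : ℝ => 1 + y) y := by fun_prop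
  have c4 : ContDiffAt ℝ ω (fun y : ℝ => 1 - y) y := by fun_prop
  exact (((c1.log (ne_of_gt h1)).sub (c2.log (ne_of_gt h2))).const_smul r).sub
    ((c3.log (ne_of_gt h3)).sub (c4.log (ne_of_gt h4))) |>.congr_of_eventuallyEq
    (by filter_upwards with z; simp [Xf, smul_eq_mul])

lemma Xf_deriv_pos (hr : 1 < r) {y : ℝ} (hy : |y| < 1/r) :
    0 < 2 * (r^2 - 1) / ((1 - r^2 * y^2) * (1 - y^2)) := by
  obtain ⟨h1, h2, h3, h4, h5, h6⟩ := Xf_facts hr hy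
  apply div_pos (by nlinarith) (by positivity)

lemma Xf_mono (hr : 1 < r) : StrictMonoOn (Xf r) (Ioo (-(1/r)) (1/r)) := by
  have habs : ∀ y ∈ Ioo (-(1/r)) (1/r), |y| < 1/r := by
    intro y hy; rw [abs_lt]; exact ⟨hy.1, hy.2⟩
  apply strictMonoOn_of_deriv_pos (convex_Ioo _ _)
  · intro y hy
    exact (Xf_hasDerivAt hr (habs y hy)).continuousAt.continuousWithinAt
  · intro y hy
    rw [interior_Ioo] at hy
    rw [(Xf_hasDerivAt hr (habs y hy)).deriv]
    exact Xf_deriv_pos hr (habs y hy)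

lemma Xf_surj (hr : 1 < r) (x : ℝ) : ∃ y, |y| < 1/r ∧ Xf r y = x := by
  have hr0 : 0 < r := lt_trans one_pos hr
  have hrm : 0 < r - 1 := by linarith
  set E := Real.exp (-((|x| + 1) / (r - 1))) with hE
  have hE0 : 0 < E := Real.exp_pos _
  have hE1 : E < 1 := by
    rw [hE, Real.exp_lt_one_iff]
    have : 0 < (|x| + 1) / (r - 1) := by positivity
    linarith
  set y₀ := (1 - E) / r with hy₀
  have hy₀0 : 0 < y₀ := div_pos (by linarith) hr0
  have hy₀lt : y₀ < 1 / r := by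
    rw [hy₀, div_lt_div_iff_of_pos_right hr0]
    linarith
  have hkey : 1 - r * y₀ = E := by
    rw [hy₀]
    field_simp
    ring
  have habs : ∀ y ∈ Icc (-y₀) y₀, |y| < 1/r := by
    intro y hy
    rw [abs_lt]
    constructor <;> [linarith [hy.1]; linarith [hy.2]]
  have hy₀abs : |y₀| < 1/r := by rw [abs_of_pos hy₀0]; exact hy₀lt
  obtain ⟨p1, p2, p3, p4, p5, p6⟩ := Xf_facts hr hy₀abs
  -- lower bound on Xf r y₀
  have hbound : |x| + 1 ≤ Xf r y₀ := by
    have hB : Real.log (1 - r * y₀) = -((|x| + 1) / (r - 1)) := by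
      rw [hkey, hE, Real.log_exp]
    have hA0 : 0 ≤ Real.log (1 + r * y₀) := by
      apply Real.log_nonneg
      nlinarith
    have hA'A : Real.log (1 + y₀) ≤ Real.log (1 + r * y₀) := by
      apply Real.log_le_log (by linarith)
      nlinarith
    have hBB' : Real.log (1 - r * y₀) ≤ Real.log (1 - y₀) := by
      apply Real.log_le_log p2
      nlinarith
    have hBval : (r - 1) * (-Real.log (1 - r * y₀)) = |x| + 1 := by
      rw [hB]
      field_simp
    unfold Xf
    nlinarith [hA0, hA'A, hBB', hBval]
  have hcont : ContinuousOn (Xf r) (Icc (-y₀) y₀) := by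
    intro y hy
    exact (Xf_hasDerivAt hr (habs y hy)).continuousAt.continuousWithinAt
  have hmem : x ∈ Icc (Xf r (-y₀)) (Xf r y₀) := by
    rw [Xf_odd]
    constructor
    · have := abs_nonneg x
      have := neg_abs_le x
      linarith
    · have := le_abs_self x
      linarith
  obtain ⟨y, hyI, hyX⟩ := intermediate_value_Icc (by linarith : -y₀ ≤ y₀) hcont hmem
  exact ⟨y, habs y hyI, hyX⟩

lemma w_exists (hr : 1 < r) :
    ∃ w : ℝ → ℝ, (∀ x, |w x| < 1/r) ∧ (∀ x, Xf r (w x) = x) ∧ w 0 = 0 ∧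
      (∀ x, w (-x) = - w x) ∧ StrictMono w ∧
      (∀ x, HasDerivAt w ((1 - r^2*(w x)^2)*(1-(w x)^2)/(2*(r^2-1))) x) ∧
      (∀ x, ContDiffAt ℝ ω w x) := by
  have hr0 : 0 < r := lt_trans one_pos hr
  choose w hwD hwX using Xf_surj hr
  have memD : ∀ {y : ℝ}, |y| < 1/r → y ∈ Ioo (-(1/r)) (1/r) := by
    intro y hy; rw [abs_lt] at hy; exact hy
  have hinj := (Xf_mono hr).injOn
  have hw0 : w 0 = 0 := by
    apply hinj (memD (hwD 0)) (memD (by rw [abs_zero]; positivity))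
    rw [hwX, Xf_zero]
  have hwodd : ∀ x, w (-x) = - w x := by
    intro x
    apply hinj (memD (hwD (-x))) (memD (by rw [abs_neg]; exact hwD x))
    rw [hwX, Xf_odd, hwX]
  have hwmono : StrictMono w := by
    intro x₁ x₂ h
    rcases lt_trichotomy (w x₁) (w x₂) with h' | h' | h'
    · exact h'
    · exfalso
      have := congrArg (Xf r) h'
      rw [hwX, hwX] at this
      exact absurd this (ne_of_lt h)
    · exfalso
      have := Xf_mono hr (memD (hwD x₂)) (memD (hwD x₁)) h'
      rw [hwX, hwX] at this
      exact absurd h (not_lt.2 this.le)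
  have hg : ∀ x, ∀ᶠ y in 𝓝 (w x), w (Xf r y) = y := by
    intro x
    filter_upwards [isOpen_Ioo.mem_nhds (memD (hwD x))] with y hy
    exact hinj (memD (hwD (Xf r y))) hy (hwX _)
  have hd : ∀ x, HasDerivAt w ((1 - r^2*(w x)^2)*(1-(w x)^2)/(2*(r^2-1))) x := by
    intro x
    obtain ⟨p1, p2, p3, p4, p5, p6⟩ := Xf_facts hr (hwD x)
    have dne : 2 * (r^2 - 1) / ((1 - r^2 * (w x)^2) * (1 - (w x)^2)) ≠ 0 :=
      ne_of_gt (Xf_deriv_pos hr (hwD x))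
    have hs := (Xf_contDiffAt hr (hwD x)).hasStrictDerivAt' (Xf_hasDerivAt hr (hwD x)) (by simp)
    have hsw := hs.to_local_left_inverse dne (hg x)
    rw [hwX] at hsw
    have : (2 * (r^2 - 1) / ((1 - r^2 * (w x)^2) * (1 - (w x)^2)))⁻¹
        = (1 - r^2*(w x)^2)*(1-(w x)^2)/(2*(r^2-1)) := by
      rw [inv_div]
    rw [this] at hsw
    exact hsw.hasDerivAt
  refine ⟨w, hwD, hwX, hw0, hwodd, hwmono, hd, ?_⟩
  intro x
  obtain ⟨p1, p2, p3, p4, p5, p6⟩ := Xf_facts hr (hwD x)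
  have dne : 2 * (r^2 - 1) / ((1 - r^2 * (w x)^2) * (1 - (w x)^2)) ≠ 0 :=
    ne_of_gt (Xf_deriv_pos hr (hwD x))
  have hf' := (Xf_hasDerivAt hr (hwD x)).hasFDerivAt_equiv dne
  have hcd := Xf_contDiffAt hr (hwD x)
  have key := hcd.to_localInverse hf' (by simp)
  have huniq := (hcd.hasStrictFDerivAt' hf' (by simp)).localInverse_unique (hg x)
  rw [hwX] at key huniq
  exact key.congr_of_eventuallyEq huniq

end

lemma CHmain {a r : ℝ} (ha : 0 < a) (hr : 1 < r) :
    ∃ ψ : ℝ → ℝ, ContDiff ℝ (⊤ : ℕ∞) ψ ∧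
      (∀ x : ℝ, (deriv ψ x) ^ 2 = (ψ x) ^ 2 * (a - ψ x) / (a * r^2 - ψ x)) ∧
      (∀ x : ℝ, 0 < ψ x) ∧
      (∀ x : ℝ, ψ (-x) = ψ x) ∧
      ψ 0 = a ∧
      (∀ x : ℝ, ψ x ≤ a) ∧
      StrictAntiOn ψ (Set.Ioi (0 : ℝ)) ∧
      (∃ C > (0 : ℝ), ∃ δ > (0 : ℝ), ∀ x : ℝ, ψ x ≤ C * Real.exp (-δ * |x|)) := by
  have hr0 : 0 < r := lt_trans one_pos hr
  have hr2 : (0:ℝ) < r^2 - 1 := by nlinarith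
  obtain ⟨w, hwD, hwX, hw0, hwodd, hwmono, hwd, hwcd⟩ := w_exists hr
  set ψ : ℝ → ℝ := fun x => a * (1 - r^2 * (w x)^2) / (1 - (w x)^2) with hψ
  have facts : ∀ x : ℝ, 0 < 1 - r^2 * (w x)^2 ∧ 0 < 1 - (w x)^2 := by
    intro x
    obtain ⟨_, _, _, _, p5, p6⟩ := Xf_facts hr (hwD x)
    exact ⟨p5, p6⟩
  have hpos : ∀ x, 0 < ψ x := by
    intro x
    obtain ⟨p5, p6⟩ := facts x
    exact div_pos (mul_pos ha p5) p6
  have hle : ∀ x, ψ x ≤ a := by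
    intro x
    obtain ⟨p5, p6⟩ := facts x
    rw [hψ, div_le_iff₀ p6]
    nlinarith [mul_nonneg (mul_nonneg ha.le hr2.le) (sq_nonneg (w x))]
  have heven : ∀ x, ψ (-x) = ψ x := by
    intro x
    simp only [hψ, hwodd, neg_sq]
  have h0 : ψ 0 = a := by simp [hψ, hw0]
  have hCD : ContDiff ℝ (⊤ : ℕ∞) ψ := by
    rw [contDiff_iff_contDiffAt]
    intro x
    obtain ⟨p5, p6⟩ := facts x
    have hw2 : ContDiffAt ℝ ω (fun x => (w x)^2) x := (hwcd x).pow 2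
    have hdiv := ((contDiffAt_const (c := a)).mul ((contDiffAt_const (c := (1:ℝ))).sub
      ((contDiffAt_const (c := r^2)).mul hw2))).div
      ((contDiffAt_const (c := (1:ℝ))).sub hw2) (ne_of_gt p6)
    exact hdiv.of_le le_top
  have hder : ∀ x, HasDerivAt ψ (-(w x) * ψ x) x := by
    intro x
    obtain ⟨p5, p6⟩ := facts x
    have h1 : HasDerivAt (fun x => (w x)^2)
        (2 * w x * ((1 - r^2*(w x)^2)*(1-(w x)^2)/(2*(r^2-1)))) x := by
      simpa [Pi.pow_def] using (hwd x).pow 2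
    have num := ((h1.const_mul (r^2)).const_sub 1).const_mul a
    have den := h1.const_sub 1
    have hdiv := num.div den (ne_of_gt p6)
    convert hdiv using 1
    · rfl
    · rfl
    · rfl
    rw [hψ]
    field_simp
    ring
  have hderiv : ∀ x, deriv ψ x = -(w x) * ψ x := fun x => (hder x).deriv
  have hinv : ∀ x : ℝ, (deriv ψ x) ^ 2 = (ψ x) ^ 2 * (a - ψ x) / (a * r^2 - ψ x) := by
    intro x
    obtain ⟨p5, p6⟩ := facts x
    have hbne : a * r^2 - ψ x ≠ 0 := by
      have := hle x
      nlinarith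
    rw [hderiv x, eq_div_iff hbne, hψ]
    field_simp
    ring
  have hanti : StrictAntiOn ψ (Set.Ioi (0:ℝ)) := by
    apply strictAntiOn_of_deriv_neg (convex_Ioi 0) hCD.continuous.continuousOn
    intro x hx
    rw [interior_Ioi] at hx
    rw [hderiv x]
    have hwx : 0 < w x := by rw [← hw0]; exact hwmono hx
    nlinarith [hpos x]
  -- exponential decay
  set δ := w 1 with hδdef
  have hδ : 0 < δ := by rw [hδdef, ← hw0]; exact hwmono one_pos
  set C := a * Real.exp δ with hC
  have hC0 : 0 < C := by positivity
  set g : ℝ → ℝ := fun x => ψ x * Real.exp (δ * x) with hg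
  have hgder : ∀ x, HasDerivAt g
      (-(w x) * ψ x * Real.exp (δ * x) + ψ x * (Real.exp (δ * x) * δ)) x := by
    intro x
    have hlin : HasDerivAt (fun x : ℝ => δ * x) δ x := by
      simpa using (hasDerivAt_id x).const_mul δ
    exact (hder x).mul hlin.exp
  have hganti : AntitoneOn g (Set.Ici (1:ℝ)) := by
    apply antitoneOn_of_deriv_nonpos (convex_Ici 1)
    · exact (hCD.continuous.mul (Real.continuous_exp.comp (continuous_const.mul continuous_id))).continuousOn
    · intro x hx
      exact (hgder x).differentiableAt.differentiableWithinAt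
    · intro x hx
      rw [interior_Ici] at hx
      rw [(hgder x).deriv]
      have hwx : δ ≤ w x := by
        rw [hδdef]
        exact hwmono.le_iff_le.2 hx.le
      have hkey : 0 ≤ ψ x * Real.exp (δ * x) * (w x - δ) :=
        mul_nonneg (mul_pos (hpos x) (Real.exp_pos (δ * x))).le (by linarith)
      nlinarith [hkey]
  have haux : ∀ z : ℝ, 0 ≤ z → ψ z ≤ C * Real.exp (-δ * z) := by
    intro z hz0
    rcases le_total 1 z with hz | hz
    · have h1 : g z ≤ g 1 := hganti (Set.self_mem_Ici) (Set.mem_Ici.2 hz) hz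
      have h2 : g 1 ≤ C := by
        rw [hg, hC]
        simp only [mul_one]
        exact mul_le_mul_of_nonneg_right (hle 1) (Real.exp_pos δ).le
      have h3 : ψ z * Real.exp (δ * z) ≤ C := le_trans h1 h2
      have hrw : C * Real.exp (-δ * z) = C / Real.exp (δ * z) := by
        rw [neg_mul, Real.exp_neg, div_eq_mul_inv]
      rw [hrw, le_div_iff₀ (Real.exp_pos _)]
      exact h3
    · have h1 : ψ z ≤ a := hle z
      have h2 : a ≤ C * Real.exp (-δ * z) := by
        rw [hC, mul_assoc, ← Real.exp_add]
        have hexp : (1:ℝ) ≤ Real.exp (δ + -δ * z) := by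
          rw [show (1:ℝ) = Real.exp 0 from (Real.exp_zero).symm]
          apply Real.exp_le_exp.2
          nlinarith
        nlinarith
      linarith
  refine ⟨ψ, hCD, hinv, hpos, heven, h0, hle, hanti, C, hC0, δ, hδ, ?_⟩
  intro x
  rcases le_total 0 x with hx | hx
  · rw [abs_of_nonneg hx]; exact haux x hx
  · rw [abs_of_nonpos hx]
    have h2 := haux (-x) (by linarith)
    calc ψ x = ψ (-(-x)) := by rw [neg_neg]
    _ = ψ (-x) := heven (-x)
    _ ≤ C * Real.exp (-δ * -x) := h2

/-- Existence of the smooth solitary wave profile for the Camassa–Holm equation: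
for fixed `k > 0` and every `c > 3k`, there is a smooth, positive, even profile `ψ`
satisfying the first-order invariant, with maximum `c - 3k` at the origin, strictly
decreasing on `(0, ∞)`, and decaying exponentially. -/
theorem solitary_wave_existence (k c : ℝ) (hk : 0 < k) (hc : 3 * k < c) :
    ∃ ψ : ℝ → ℝ, ContDiff ℝ (⊤ : ℕ∞) ψ ∧
      (∀ x : ℝ, (deriv ψ x) ^ 2 = (ψ x) ^ 2 * (c - 3 * k - ψ x) / (c - k - ψ x)) ∧
      (∀ x : ℝ, 0 < ψ x) ∧
      (∀ x : ℝ, ψ (-x) = ψ x) ∧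
      ψ 0 = c - 3 * k ∧
      (∀ x : ℝ, ψ x ≤ c - 3 * k) ∧
      StrictAntiOn ψ (Set.Ioi (0 : ℝ)) ∧
      (∃ C > (0 : ℝ), ∃ δ > (0 : ℝ), ∀ x : ℝ, ψ x ≤ C * Real.exp (-δ * |x|)) := by
  have ha : 0 < c - 3 * k := by linarith
  have hb : 0 < c - k := by linarith
  have hq : 1 < (c - k) / (c - 3 * k) := by
    rw [lt_div_iff₀ ha]
    linarith
  set r := Real.sqrt ((c - k) / (c - 3 * k)) with hrdef
  have hr : 1 < r := by
    rw [hrdef, show (1:ℝ) = Real.sqrt 1 by simp]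
    exact Real.sqrt_lt_sqrt (by norm_num) hq
  have hr2 : (c - 3 * k) * r ^ 2 = c - k := by
    rw [hrdef, Real.sq_sqrt (by positivity)]
    field_simp
  obtain ⟨ψ, h1, h2, h3, h4, h5, h6, h7, h8⟩ := CHmain (a := c - 3 * k) ha hr
  refine ⟨ψ, h1, ?_, h3, h4, h5, h6, h7, h8⟩
  intro x
  have := h2 x
  rwa [hr2] at this
end

section
/- Let k > 0 and c > 3k, and set ξ₀ := √((c − 3k)/(2k)). Then the improper integral ∫₀^{c−3k} √(c − k − t)/√(c − 3k − t) dt converges and equals 2k (ξ₀ √(1 + ξ₀²) + arcsinh ξ₀). Consequently M(c) := 2 ∫₀^{c−3k} √(c − k − t)/√(c − 3k − t) dt = 4k (ξ₀ √(1 + ξ₀²) + arcsinh ξ₀). -/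
/-!
With `a = c - 3k`, `s = a - t` and `b = 2k` the integrand becomes `√(s + b) / √s`, which has the
explicit antiderivative `√(s (s + b)) + b arsinh √(s / b)`, continuous up to `s = 0`. Since the
integrand is nonnegative, the fundamental theorem of calculus gives both the convergence of the
improper integral and its value `√(a (a + b)) + b arsinh √(a / b)`; with `ξ₀ = √(a / b)` the
first term is `b ξ₀ √(1 + ξ₀²)`.
-/

open Real MeasureTheory intervalIntegral Set

variable {b : ℝ}

theorem hasDerivAt_sqrt_mul_add_add_mul_arsinh (hb : 0 < b) {s : ℝ} (hs : 0 < s) :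
    HasDerivAt (fun s => √(s * (s + b)) + b * arsinh √(s / b)) (√(s + b) / √s) s := by
  have hsb : 0 < s + b := by linarith
  have hprod : HasDerivAt (fun s => √(s * (s + b))) ((s + b + s) / (2 * √(s * (s + b)))) s := by
    simpa using ((hasDerivAt_id s).mul ((hasDerivAt_id s).add_const b)).sqrt (mul_pos hs hsb).ne'
  have harsinh : HasDerivAt (fun s => arsinh √(s / b))
      ((√(1 + √(s / b) ^ 2))⁻¹ * (1 / b / (2 * √(s / b)))) s := by
    simpa using (((hasDerivAt_id s).div_const b).sqrt (by positivity)).arsinh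
  refine (hprod.add (harsinh.const_mul b)).congr_deriv ?_
  rw [sq_sqrt (by positivity), sqrt_div hs.le, sqrt_mul hs.le,
    show 1 + s / b = (s + b) / b by field_simp; ring, sqrt_div hsb.le]
  have hb2 : √b ^ 2 = b := sq_sqrt hb.le
  have hsb2 : √(s + b) ^ 2 = s + b := sq_sqrt hsb.le
  field_simp
  linear_combination hb2 - 2 * hsb2

theorem integral_sqrt_add_div_sqrt (hb : 0 < b) {a : ℝ} (ha : 0 ≤ a) :
    IntervalIntegrable (fun s => √(s + b) / √s) volume 0 a ∧
      ∫ s in 0..a, √(s + b) / √s = √(a * (a + b)) + b * arsinh √(a / b) := by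
  set G : ℝ → ℝ := fun s => √(s * (s + b)) + b * arsinh √(s / b)
  have hcont : ContinuousOn G (Icc 0 a) :=
    ((continuous_id.mul (continuous_id.add continuous_const)).sqrt.add
      (continuous_const.mul (continuous_arsinh.comp (continuous_id.div_const b).sqrt))).continuousOn
  have hderiv : ∀ s ∈ Ioo 0 a, HasDerivAt G (√(s + b) / √s) s := fun s hs =>
    hasDerivAt_sqrt_mul_add_add_mul_arsinh hb hs.1
  have hint : IntervalIntegrable (fun s => √(s + b) / √s) volume 0 a :=
    (intervalIntegrable_iff_integrableOn_Ioc_of_le ha).2 <|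
      integrableOn_deriv_of_nonneg hcont hderiv fun s _ => by positivity
  refine ⟨hint, ?_⟩
  rw [integral_eq_sub_of_hasDerivAt_of_le ha hcont hderiv hint]
  simp [G]

theorem integral_sqrt_sub_add_div_sqrt_sub (hb : 0 < b) {a : ℝ} (ha : 0 ≤ a) :
    IntervalIntegrable (fun t => √(a - t + b) / √(a - t)) volume 0 a ∧
      ∫ t in 0..a, √(a - t + b) / √(a - t) = √(a * (a + b)) + b * arsinh √(a / b) := by
  obtain ⟨hint, hval⟩ := integral_sqrt_add_div_sqrt hb ha
  refine ⟨by simpa using (hint.comp_sub_left a).symm, ?_⟩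
  rw [integral_comp_sub_left (fun s => √(s + b) / √s) a]
  simpa using hval

theorem sqrt_mul_add_eq_mul_sqrt_div_mul_sqrt (hb : 0 < b) {a : ℝ} (ha : 0 ≤ a) :
    √(a * (a + b)) = b * (√(a / b) * √(1 + √(a / b) ^ 2)) := by
  rw [sq_sqrt (by positivity), ← sqrt_mul (by positivity),
    show a * (a + b) = b ^ 2 * (a / b * (1 + a / b)) by field_simp; ring,
    sqrt_mul (sq_nonneg b), sqrt_sq hb.le]

/-- The mass integral of the Camassa–Holm solitary wave: the improper integral
`∫₀^{c-3k} √(c-k-t)/√(c-3k-t) dt` converges and equals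
`2k (ξ₀ √(1+ξ₀²) + arcsinh ξ₀)` with `ξ₀ = √((c-3k)/(2k))`; consequently
`M(c) = 2 ∫₀^{c-3k} … = 4k (ξ₀ √(1+ξ₀²) + arcsinh ξ₀)`. -/
theorem mass_integral_value (k c : ℝ) (hk : 0 < k) (hc : 3 * k < c) :
    IntervalIntegrable (fun t => Real.sqrt (c - k - t) / Real.sqrt (c - 3 * k - t))
      MeasureTheory.volume 0 (c - 3 * k) ∧
    (∫ t in (0 : ℝ)..(c - 3 * k), Real.sqrt (c - k - t) / Real.sqrt (c - 3 * k - t)) =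
      2 * k * (Real.sqrt ((c - 3 * k) / (2 * k)) *
          Real.sqrt (1 + (Real.sqrt ((c - 3 * k) / (2 * k))) ^ 2) +
        Real.arsinh (Real.sqrt ((c - 3 * k) / (2 * k)))) ∧
    2 * (∫ t in (0 : ℝ)..(c - 3 * k), Real.sqrt (c - k - t) / Real.sqrt (c - 3 * k - t)) =
      4 * k * (Real.sqrt ((c - 3 * k) / (2 * k)) *
          Real.sqrt (1 + (Real.sqrt ((c - 3 * k) / (2 * k))) ^ 2) +
        Real.arsinh (Real.sqrt ((c - 3 * k) / (2 * k)))) := by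
  have ha : 0 ≤ c - 3 * k := by linarith
  have hb : 0 < 2 * k := by linarith
  have hfun : (fun t => √(c - 3 * k - t + 2 * k) / √(c - 3 * k - t)) =
      fun t => √(c - k - t) / √(c - 3 * k - t) := by
    funext t
    congr 2
    ring
  obtain ⟨hint, hval⟩ := integral_sqrt_sub_add_div_sqrt_sub hb ha
  rw [hfun] at hint hval
  rw [sqrt_mul_add_eq_mul_sqrt_div_mul_sqrt hb ha] at hval
  exact ⟨hint, by rw [hval]; ring, by rw [hval]; ring⟩
end

section
/- Let k > 0 and define M(c) := 4k (ξ₀ √(1 + ξ₀²) + arcsinh ξ₀) with ξ₀ := √((c − 3k)/(2k)). Then for every c > 3k the function M is differentiable at c with derivative M'(c) = 2 √((c − k)/(c − 3k)) > 0; in particular c ↦ M(c) is strictly increasing on (3k, ∞). -/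
/-!
In the variable `ξ = √((c - 3k)/(2k))` the mass is `4k F(ξ)` with
`F ξ = ξ √(1 + ξ²) + arsinh ξ`, an antiderivative of `2 √(1 + ξ²)`. Since `dξ/dc = 1/(4kξ)`
and `1 + ξ² = (c - k)/(2k)`, the chain rule gives `M'(c) = 2 √(1 + ξ²)/ξ = 2 √((c - k)/(c - 3k))`,
which is positive, so `M` is strictly increasing.
-/

open Real

theorem hasDerivAt_mul_sqrt_one_add_sq_add_arsinh (x : ℝ) :
    HasDerivAt (fun x : ℝ => x * √(1 + x ^ 2) + arsinh x) (2 * √(1 + x ^ 2)) x := by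
  have hpos : 0 < 1 + x ^ 2 := by positivity
  have hsq : √(1 + x ^ 2) ^ 2 = 1 + x ^ 2 := sq_sqrt hpos.le
  have hroot : HasDerivAt (fun x : ℝ => √(1 + x ^ 2)) (2 * x / (2 * √(1 + x ^ 2))) x := by
    simpa using (((hasDerivAt_id x).pow 2).const_add 1).sqrt hpos.ne'
  refine (((hasDerivAt_id' x).mul hroot).add (hasDerivAt_arsinh x)).congr_deriv ?_
  field_simp
  linear_combination -hsq

theorem hasDerivAt_sqrt_sub_div {a b c : ℝ} (hb : 0 < b) (hac : a < c) :
    HasDerivAt (fun c : ℝ => √((c - a) / b)) (1 / (2 * √((c - a) / b)) * (1 / b)) c := by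
  have hu : HasDerivAt (fun c : ℝ => (c - a) / b) (1 / b) c := by
    simpa using ((hasDerivAt_id c).sub_const a).div_const b
  exact (hasDerivAt_sqrt (div_pos (sub_pos.mpr hac) hb).ne').comp c hu

section

variable {k c : ℝ}

theorem sqrt_sub_div_sub_eq_sqrt_one_add_sq_div (hk : 0 < k) (hc : 3 * k < c) :
    √((c - k) / (c - 3 * k)) =
      √(1 + √((c - 3 * k) / (2 * k)) ^ 2) / √((c - 3 * k) / (2 * k)) := by
  have hu : 0 ≤ (c - 3 * k) / (2 * k) := div_nonneg (by linarith) (by linarith)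
  rw [sq_sqrt hu, ← sqrt_div' _ hu]
  congr 1
  field_simp
  ring

theorem hasDerivAt_mass (hk : 0 < k) (hc : 3 * k < c) :
    HasDerivAt (fun c : ℝ =>
        4 * k * (√((c - 3 * k) / (2 * k)) * √(1 + √((c - 3 * k) / (2 * k)) ^ 2) +
          arsinh √((c - 3 * k) / (2 * k))))
      (2 * √((c - k) / (c - 3 * k))) c := by
  refine (((hasDerivAt_mul_sqrt_one_add_sq_add_arsinh _).comp c
    (hasDerivAt_sqrt_sub_div (by linarith) hc)).const_mul (4 * k)).congr_deriv ?_
  rw [sqrt_sub_div_sub_eq_sqrt_one_add_sq_div hk hc]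
  field_simp
  ring

theorem two_mul_sqrt_sub_div_sub_pos (hk : 0 < k) (hc : 3 * k < c) :
    0 < 2 * √((c - k) / (c - 3 * k)) := by
  have : 0 < (c - k) / (c - 3 * k) := div_pos (by linarith) (by linarith)
  positivity

end

/-- Monotonicity of the solitary-wave mass: the closed-form mass
`M(c) = 4k (ξ₀ √(1+ξ₀²) + arcsinh ξ₀)`, `ξ₀ = √((c-3k)/(2k))`, is differentiable
on `(3k, ∞)` with derivative `2 √((c-k)/(c-3k)) > 0`, hence strictly increasing. -/
theorem mass_monotone (k : ℝ) (hk : 0 < k) :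
    (∀ c : ℝ, 3 * k < c →
      HasDerivAt (fun c : ℝ =>
          4 * k * (Real.sqrt ((c - 3 * k) / (2 * k)) *
              Real.sqrt (1 + (Real.sqrt ((c - 3 * k) / (2 * k))) ^ 2) +
            Real.arsinh (Real.sqrt ((c - 3 * k) / (2 * k)))))
        (2 * Real.sqrt ((c - k) / (c - 3 * k))) c ∧
      0 < 2 * Real.sqrt ((c - k) / (c - 3 * k))) ∧
    StrictMonoOn (fun c : ℝ =>
        4 * k * (Real.sqrt ((c - 3 * k) / (2 * k)) *
            Real.sqrt (1 + (Real.sqrt ((c - 3 * k) / (2 * k))) ^ 2) +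
          Real.arsinh (Real.sqrt ((c - 3 * k) / (2 * k)))))
      (Set.Ioi (3 * k)) := by
  refine ⟨fun c hc => ⟨hasDerivAt_mass hk hc, two_mul_sqrt_sub_div_sub_pos hk hc⟩, ?_⟩
  refine strictMonoOn_of_hasDerivWithinAt_pos (convex_Ioi _)
    (fun c hc => (hasDerivAt_mass hk hc).continuousAt.continuousWithinAt)
    (fun c hc => (hasDerivAt_mass hk ?_).hasDerivWithinAt) (fun c hc => two_mul_sqrt_sub_div_sub_pos hk ?_)
  all_goals rwa [interior_Ioi] at hc
end

section
/- Let k > 0 and define E(c) := 2 ∫₀^{c−3k} (c − 3k − z)(z + k)/√(z(z + 2k)) dz for c > 3k. Then for every c > 3k the function E is differentiable at c with derivative E'(c) = 2 ∫₀^{c−3k} (z + k)/√(z(z + 2k)) dz = 2 √((c − 3k)(c − k)) > 0; in particular c ↦ E(c) is strictly increasing on (3k, ∞). -/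
/-!
With `F z = √(z (z + 2k))` one has `F' z = (z + k) / √(z (z + 2k)) ≥ 0` on `(0, ∞)` and `F 0 = 0`.
Nonnegativity makes `F'` integrable despite its singularity at `0`, so `∫₀^a F' = F a`, and an
integration by parts turns `∫₀^a (a - z) F' z dz` into `∫₀^a F`. Hence `E(c) = 2 ∫₀^{c-3k} F`,
whose derivative is `2 F (c - 3k) = 2 √((c - 3k)(c - k)) > 0` by the fundamental theorem of calculus.
-/

open MeasureTheory Set intervalIntegral

theorem integral_sub_mul_deriv_eq {F f : ℝ → ℝ} {a b : ℝ} (hab : a ≤ b)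
    (hF : ContinuousOn F (Icc a b)) (hFf : ∀ x ∈ Ioo a b, HasDerivAt F (f x) x)
    (hf : IntervalIntegrable f volume a b) :
    ∫ x in a..b, (b - x) * f x = (∫ x in a..b, F x) - (b - a) * F a := by
  have hparts := integral_mul_deriv_eq_deriv_mul_of_hasDerivAt (u := (b - ·)) (u' := fun _ ↦ -1)
    (by fun_prop) (by rwa [uIcc_of_le hab])
    (fun x _ ↦ (hasDerivAt_id x).const_sub b)
    (by simpa only [min_eq_left hab, max_eq_right hab] using hFf) intervalIntegrable_const hf
  rw [hparts]
  simp only [sub_self, zero_mul, neg_one_mul, intervalIntegral.integral_neg]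
  ring

section SqrtQuadratic

variable {k : ℝ}

theorem hasDerivAt_sqrt_mul_add_two_mul (hk : 0 ≤ k) {z : ℝ} (hz : 0 < z) :
    HasDerivAt (fun z ↦ √(z * (z + 2 * k))) ((z + k) / √(z * (z + 2 * k))) z := by
  have hpos : 0 < z * (z + 2 * k) := by positivity
  have hquad : HasDerivAt (fun z ↦ z * (z + 2 * k)) (1 * (z + 2 * k) + z * 1) z :=
    (hasDerivAt_id' z).mul ((hasDerivAt_id' z).add_const (2 * k))
  convert hquad.sqrt hpos.ne' using 1
  field_simp
  ring

theorem intervalIntegrable_div_sqrt_mul_add_two_mul (hk : 0 ≤ k) {a : ℝ} (ha : 0 ≤ a) :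
    IntervalIntegrable (fun z ↦ (z + k) / √(z * (z + 2 * k))) volume 0 a := by
  refine intervalIntegrable_deriv_of_nonneg (g := fun z ↦ √(z * (z + 2 * k))) (by fun_prop) ?_ ?_
  all_goals simp only [min_eq_left ha, max_eq_right ha]
  · exact fun z hz ↦ hasDerivAt_sqrt_mul_add_two_mul hk hz.1
  · exact fun z hz ↦ div_nonneg (by linarith [hz.1]) (Real.sqrt_nonneg _)

theorem integral_div_sqrt_mul_add_two_mul (hk : 0 ≤ k) {a : ℝ} (ha : 0 ≤ a) :
    ∫ z in (0 : ℝ)..a, (z + k) / √(z * (z + 2 * k)) = √(a * (a + 2 * k)) := by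
  rw [integral_eq_sub_of_hasDerivAt_of_le ha (by fun_prop)
    (fun z hz ↦ hasDerivAt_sqrt_mul_add_two_mul hk hz.1)
    (intervalIntegrable_div_sqrt_mul_add_two_mul hk ha)]
  simp

theorem integral_sub_mul_div_sqrt_mul_add_two_mul (hk : 0 ≤ k) {a : ℝ} (ha : 0 ≤ a) :
    ∫ z in (0 : ℝ)..a, (a - z) * (z + k) / √(z * (z + 2 * k)) =
      ∫ z in (0 : ℝ)..a, √(z * (z + 2 * k)) := by
  simp_rw [mul_div_assoc]
  rw [integral_sub_mul_deriv_eq ha (by fun_prop)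
    (fun z hz ↦ hasDerivAt_sqrt_mul_add_two_mul hk hz.1)
    (intervalIntegrable_div_sqrt_mul_add_two_mul hk ha)]
  simp

end SqrtQuadratic

noncomputable def momentum (k c : ℝ) : ℝ :=
  2 * ∫ z in (0 : ℝ)..(c - 3 * k), (c - 3 * k - z) * (z + k) / √(z * (z + 2 * k))

theorem hasDerivAt_momentum {k c : ℝ} (hk : 0 ≤ k) (hc : 3 * k < c) :
    HasDerivAt (momentum k) (2 * √((c - 3 * k) * (c - k))) c := by
  have hE : momentum k =ᶠ[nhds c] fun c ↦ 2 * ∫ z in (0 : ℝ)..(c - 3 * k), √(z * (z + 2 * k)) := by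
    filter_upwards [Ioi_mem_nhds hc] with c' hc'
    rw [momentum, integral_sub_mul_div_sqrt_mul_add_two_mul hk (sub_nonneg.2 (le_of_lt hc'))]
  have hF := ((Continuous.integral_hasStrictDerivAt
    (f := fun z ↦ √(z * (z + 2 * k))) (by fun_prop) 0 (c - 3 * k)).hasDerivAt.comp c
    ((hasDerivAt_id' c).sub_const (3 * k))).const_mul 2
  have hval : 2 * √((c - 3 * k) * (c - k)) = 2 * (√((c - 3 * k) * (c - 3 * k + 2 * k)) * 1) := by
    ring_nf
  rw [hval]
  exact hF.congr_of_eventuallyEq hE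

/-- Monotonicity of the solitary-wave momentum:
`E(c) = 2 ∫₀^{c-3k} (c-3k-z)(z+k)/√(z(z+2k)) dz` is differentiable at every `c > 3k`
with derivative `2 ∫₀^{c-3k} (z+k)/√(z(z+2k)) dz = 2 √((c-3k)(c-k)) > 0`,
hence strictly increasing on `(3k, ∞)`. -/
theorem momentum_monotone (k : ℝ) (hk : 0 < k) :
    (∀ c : ℝ, 3 * k < c →
      HasDerivAt (fun c : ℝ =>
          2 * ∫ z in (0 : ℝ)..(c - 3 * k),
            (c - 3 * k - z) * (z + k) / Real.sqrt (z * (z + 2 * k)))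
        (2 * ∫ z in (0 : ℝ)..(c - 3 * k), (z + k) / Real.sqrt (z * (z + 2 * k))) c ∧
      (2 * ∫ z in (0 : ℝ)..(c - 3 * k), (z + k) / Real.sqrt (z * (z + 2 * k))) =
        2 * Real.sqrt ((c - 3 * k) * (c - k)) ∧
      0 < 2 * Real.sqrt ((c - 3 * k) * (c - k))) ∧
    StrictMonoOn (fun c : ℝ =>
        2 * ∫ z in (0 : ℝ)..(c - 3 * k),
          (c - 3 * k - z) * (z + k) / Real.sqrt (z * (z + 2 * k)))
      (Set.Ioi (3 * k)) := by
  have hderiv_eq : ∀ c, 3 * k < c →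
      2 * ∫ z in (0 : ℝ)..(c - 3 * k), (z + k) / √(z * (z + 2 * k)) =
        2 * √((c - 3 * k) * (c - k)) := fun c hc ↦ by
    rw [integral_div_sqrt_mul_add_two_mul hk.le (by linarith)]
    ring_nf
  have hderiv_pos : ∀ c, 3 * k < c → 0 < 2 * √((c - 3 * k) * (c - k)) := fun c hc ↦ by
    have : 0 < (c - 3 * k) * (c - k) := mul_pos (by linarith) (by linarith)
    positivity
  refine ⟨fun c hc ↦ ⟨?_, hderiv_eq c hc, hderiv_pos c hc⟩, ?_⟩
  · rw [hderiv_eq c hc]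
    exact hasDerivAt_momentum hk.le hc
  · refine strictMonoOn_of_hasDerivWithinAt_pos (convex_Ioi _)
      (fun c hc ↦ (hasDerivAt_momentum hk.le hc).continuousAt.continuousWithinAt)
      (fun c hc ↦ ?_) (fun c hc ↦ hderiv_pos c (by simpa using hc))
    rw [interior_Ioi] at hc ⊢
    exact (hasDerivAt_momentum hk.le hc).hasDerivWithinAt
end

section
/- Let c, k ∈ ℝ, ν ∈ (0, 1), and ξ ∈ ℝ. Then 1 − (iξ − ν)² ≠ 0 in ℂ, and the real part of the complex number (iξ − ν) · (1 − (iξ − ν)²)^{−1} · (c − 3k − (c − k)(iξ − ν)²) equals −ν(c − k) − 2kν(ν² + ξ² − 1)/((1 − ν² + ξ²)² + 4ξ²ν²). -/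
open Complex in
/-- The real part of the Fourier symbol of the linearized Camassa–Holm operator
`J L₀` in the exponentially weighted space `L²_ν`. -/
theorem symbol_real_part (c k ν : ℝ) (hν : ν ∈ Set.Ioo (0 : ℝ) 1) (ξ : ℝ) :
    (1 - (Complex.I * (ξ : ℂ) - (ν : ℂ)) ^ 2) ≠ 0 ∧
    ((Complex.I * (ξ : ℂ) - (ν : ℂ)) * (1 - (Complex.I * (ξ : ℂ) - (ν : ℂ)) ^ 2)⁻¹ *
        ((c : ℂ) - 3 * (k : ℂ) - ((c : ℂ) - (k : ℂ)) *
          (Complex.I * (ξ : ℂ) - (ν : ℂ)) ^ 2)).re =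
      -ν * (c - k) - 2 * k * ν * (ν ^ 2 + ξ ^ 2 - 1) /
        ((1 - ν ^ 2 + ξ ^ 2) ^ 2 + 4 * ξ ^ 2 * ν ^ 2) := by
  obtain ⟨hν0, hν1⟩ := hν
  have hz2 : (Complex.I * (ξ : ℂ) - (ν : ℂ)) ^ 2
      = (((ν ^ 2 - ξ ^ 2 : ℝ)) : ℂ) + ((-2 * ξ * ν : ℝ) : ℂ) * Complex.I := by
    apply Complex.ext <;>
      simp [pow_two, Complex.sub_re, Complex.sub_im, Complex.mul_re, Complex.mul_im] <;> ring
  have hre : (1 - (Complex.I * (ξ : ℂ) - (ν : ℂ)) ^ 2).re = 1 - ν ^ 2 + ξ ^ 2 := by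
    rw [hz2]; simp; simp only [← Complex.ofReal_pow, Complex.ofReal_re, Complex.ofReal_im]; ring
  have hpos : (0:ℝ) < 1 - ν ^ 2 + ξ ^ 2 := by nlinarith [sq_nonneg ξ]
  have hne : (1 - (Complex.I * (ξ : ℂ) - (ν : ℂ)) ^ 2) ≠ 0 := by
    intro h
    rw [h] at hre
    simp at hre
    nlinarith
  refine ⟨hne, ?_⟩
  have hD : (1 - ν ^ 2 + ξ ^ 2) ^ 2 + 4 * ξ ^ 2 * ν ^ 2 ≠ 0 := by positivity
  have hsq : Complex.normSq (1 - (Complex.I * (ξ : ℂ) - (ν : ℂ)) ^ 2)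
      = (1 - ν ^ 2 + ξ ^ 2) ^ 2 + 4 * ξ ^ 2 * ν ^ 2 := by
    rw [hz2]; simp [Complex.normSq_apply]; simp only [← Complex.ofReal_pow, Complex.ofReal_re, Complex.ofReal_im]; ring
  rw [mul_comm _ (_⁻¹), mul_assoc, inv_mul_eq_div, Complex.div_re, hsq, hz2]
  simp [Complex.mul_re, Complex.mul_im, Complex.sub_re, Complex.sub_im, Complex.add_re,
    Complex.add_im]
  simp only [← Complex.ofReal_pow, Complex.ofReal_re, Complex.ofReal_im]
  field_simp
  ring
end

section
/- Let k > 0, c > 3k, and ν ∈ (0, ν₀) with ν₀ := √((c − 3k)/(c − k)). Then for every ξ ∈ ℝ, λ_r(ξ) := −ν(c − k) − 2kν(ν² + ξ² − 1)/((1 − ν² + ξ²)² + 4ξ²ν²) < 0. -/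
/-- Negativity of the real part of the Fourier symbol of `J L₀` in `L²_ν`:
for `k > 0`, `c > 3k`, and `0 < ν < √((c-3k)/(c-k))`,
`λ_r(ξ) = -ν(c-k) - 2kν(ν²+ξ²-1)/((1-ν²+ξ²)² + 4ξ²ν²) < 0` for all `ξ`. -/
theorem symbol_real_part_neg (k c ν : ℝ) (hk : 0 < k) (hc : 3 * k < c)
    (hν : ν ∈ Set.Ioo (0 : ℝ) (Real.sqrt ((c - 3 * k) / (c - k)))) (ξ : ℝ) :
    -ν * (c - k) - 2 * k * ν * (ν ^ 2 + ξ ^ 2 - 1) /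
        ((1 - ν ^ 2 + ξ ^ 2) ^ 2 + 4 * ξ ^ 2 * ν ^ 2) < 0 := by
  obtain ⟨hν0, hνs⟩ := hν
  have hck : (0 : ℝ) < c - k := by linarith
  have hν2' : ν ^ 2 < (c - 3 * k) / (c - k) := (Real.lt_sqrt hν0.le).mp hνs
  have hν2 : (c - k) * ν ^ 2 < c - 3 * k := by
    rw [lt_div_iff₀ hck] at hν2'; linarith [hν2']
  have hν1 : ν ^ 2 < 1 := by
    nlinarith
  set D : ℝ := (1 - ν ^ 2 + ξ ^ 2) ^ 2 + 4 * ξ ^ 2 * ν ^ 2 with hDdef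
  have hD : 0 < D := by
    have h1 : 0 < 1 - ν ^ 2 + ξ ^ 2 := by nlinarith [sq_nonneg ξ]
    nlinarith [sq_nonneg ξ, sq_nonneg ν]
  have key : 0 < (c - k) * D + 2 * k * (ν ^ 2 + ξ ^ 2 - 1) := by
    nlinarith [sq_nonneg ξ, sq_nonneg (ξ ^ 2), sq_nonneg (1 - ν ^ 2 + ξ ^ 2),
      mul_pos hck hD, sq_nonneg ν, mul_nonneg (sq_nonneg ξ) (sq_nonneg ν)]
  have heq : -ν * (c - k) - 2 * k * ν * (ν ^ 2 + ξ ^ 2 - 1) / D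
      = -(ν * ((c - k) * D + 2 * k * (ν ^ 2 + ξ ^ 2 - 1))) / D := by
    field_simp
    ring
  rw [heq]
  apply div_neg_of_neg_of_pos _ hD
  exact neg_neg_of_pos (mul_pos hν0 key)
end

section
/- Let k, c ∈ ℝ, η ∈ ℝ, ν ∈ (0, 1), and ξ ∈ ℝ. Then (iξ − ν) ≠ 0 and 1 − (iξ − ν)² ≠ 0 in ℂ, and the real part of λ(ξ) := (iξ − ν) · (1 − (iξ − ν)²)^{−1} · (c − 3k − (c − k)(iξ − ν)² + η²(iξ − ν)^{−2}) equals λ_r(ξ) − η²ν(1 − ν² + 3ξ²)/((ξ² + ν²)((1 − ν² + ξ²)² + 4ξ²ν²)), where λ_r(ξ) := −ν(c − k) − 2kν(ν² + ξ² − 1)/((1 − ν² + ξ²)² + 4ξ²ν²). -/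
/-!
With `z = iξ - ν`, the symbol splits into partial fractions
`λ = (c - k) z - 2k z / (1 - z²) + η² / (z (1 - z²))`, and the real part of each piece is
read off from `Re(u / w) = Re(u w̄) / |w|²`, using `1 - z² = (1 - ν² + ξ²) + 2iνξ`.
-/

open Complex

theorem symbol_eq_add_partial_fractions {K : Type*} [Field K] {z : K} (hz : z ≠ 0)
    (hz' : 1 - z ^ 2 ≠ 0) (a b e : K) :
    z * (1 - z ^ 2)⁻¹ * (a - 3 * b - (a - b) * z ^ 2 + e ^ 2 * (z ^ 2)⁻¹) =
      (a - b) * z - 2 * b * (z / (1 - z ^ 2)) + e ^ 2 * (z * (1 - z ^ 2))⁻¹ := by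
  field_simp
  ring

section WeightedFrequency

variable (ν ξ : ℝ)

lemma re_I_mul_sub : (I * ξ - ν).re = -ν := by simp
lemma im_I_mul_sub : (I * ξ - ν).im = ξ := by simp

lemma re_one_sub_sq_I_mul_sub : (1 - (I * ξ - ν) ^ 2).re = 1 - ν ^ 2 + ξ ^ 2 := by
  rw [sub_re, one_re, sq, mul_re, re_I_mul_sub, im_I_mul_sub]; ring

lemma im_one_sub_sq_I_mul_sub : (1 - (I * ξ - ν) ^ 2).im = 2 * ν * ξ := by
  rw [sub_im, one_im, sq, mul_im, re_I_mul_sub, im_I_mul_sub]; ring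

lemma normSq_I_mul_sub : normSq (I * ξ - ν) = ξ ^ 2 + ν ^ 2 := by
  rw [normSq_apply, re_I_mul_sub, im_I_mul_sub]; ring

lemma normSq_one_sub_sq_I_mul_sub :
    normSq (1 - (I * ξ - ν) ^ 2) = (1 - ν ^ 2 + ξ ^ 2) ^ 2 + 4 * ξ ^ 2 * ν ^ 2 := by
  rw [normSq_apply, re_one_sub_sq_I_mul_sub, im_one_sub_sq_I_mul_sub]; ring

lemma re_I_mul_sub_div_one_sub_sq :
    ((I * ξ - ν) / (1 - (I * ξ - ν) ^ 2)).re =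
      ν * (ν ^ 2 + ξ ^ 2 - 1) / ((1 - ν ^ 2 + ξ ^ 2) ^ 2 + 4 * ξ ^ 2 * ν ^ 2) := by
  rw [div_re, normSq_one_sub_sq_I_mul_sub, re_one_sub_sq_I_mul_sub, im_one_sub_sq_I_mul_sub,
    re_I_mul_sub, im_I_mul_sub, ← add_div]
  ring

lemma re_inv_I_mul_sub_mul_one_sub_sq :
    ((I * ξ - ν) * (1 - (I * ξ - ν) ^ 2))⁻¹.re =
      -ν * (1 - ν ^ 2 + 3 * ξ ^ 2) /
        ((ξ ^ 2 + ν ^ 2) * ((1 - ν ^ 2 + ξ ^ 2) ^ 2 + 4 * ξ ^ 2 * ν ^ 2)) := by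
  rw [inv_re, map_mul, normSq_I_mul_sub, normSq_one_sub_sq_I_mul_sub, mul_re,
    re_one_sub_sq_I_mul_sub, im_one_sub_sq_I_mul_sub, re_I_mul_sub, im_I_mul_sub]
  ring

lemma I_mul_sub_ne_zero {ν : ℝ} (hν : ν ≠ 0) : I * ξ - ν ≠ 0 := fun h => by
  simpa [re_I_mul_sub, hν] using congrArg re h

lemma one_sub_sq_I_mul_sub_ne_zero {ν : ℝ} (hν : ν ^ 2 < 1) : 1 - (I * ξ - ν) ^ 2 ≠ 0 :=
  fun h => by
    have := congrArg re h
    rw [re_one_sub_sq_I_mul_sub, zero_re] at this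
    nlinarith [sq_nonneg ξ]

end WeightedFrequency

/-- The real part of the Fourier symbol of the transversely perturbed linearized
Camassa–Holm operator `J(L₀ + η² ∂ₓ⁻²)` in the weighted space `L²_ν`. -/
theorem perturbed_symbol_real_part (k c η ν : ℝ) (hν : ν ∈ Set.Ioo (0 : ℝ) 1) (ξ : ℝ) :
    (Complex.I * (ξ : ℂ) - (ν : ℂ)) ≠ 0 ∧
    (1 - (Complex.I * (ξ : ℂ) - (ν : ℂ)) ^ 2) ≠ 0 ∧
    ((Complex.I * (ξ : ℂ) - (ν : ℂ)) * (1 - (Complex.I * (ξ : ℂ) - (ν : ℂ)) ^ 2)⁻¹ *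
        ((c : ℂ) - 3 * (k : ℂ) - ((c : ℂ) - (k : ℂ)) * (Complex.I * (ξ : ℂ) - (ν : ℂ)) ^ 2 +
          (η : ℂ) ^ 2 * ((Complex.I * (ξ : ℂ) - (ν : ℂ)) ^ 2)⁻¹)).re =
      (-ν * (c - k) - 2 * k * ν * (ν ^ 2 + ξ ^ 2 - 1) /
          ((1 - ν ^ 2 + ξ ^ 2) ^ 2 + 4 * ξ ^ 2 * ν ^ 2)) -
        η ^ 2 * ν * (1 - ν ^ 2 + 3 * ξ ^ 2) /
          ((ξ ^ 2 + ν ^ 2) * ((1 - ν ^ 2 + ξ ^ 2) ^ 2 + 4 * ξ ^ 2 * ν ^ 2)) := by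
  obtain ⟨hν0, hν1⟩ := hν
  have hz := I_mul_sub_ne_zero ξ hν0.ne'
  have hz' := one_sub_sq_I_mul_sub_ne_zero ξ (by nlinarith : ν ^ 2 < 1)
  refine ⟨hz, hz', ?_⟩
  rw [symbol_eq_add_partial_fractions hz hz', add_re, sub_re, ← ofReal_sub, ← ofReal_pow,
    re_ofReal_mul, re_ofReal_mul, ← ofReal_ofNat, ← ofReal_mul, re_ofReal_mul, re_I_mul_sub,
    re_I_mul_sub_div_one_sub_sq, re_inv_I_mul_sub_mul_one_sub_sq]
  ring
end

section
/- Let k > 0, c > 3k, η ∈ ℝ, and ν ∈ (0, ν₀) with ν₀ := √((c − 3k)/(c − k)). Then for every ξ ∈ ℝ, the real part of λ(ξ) := (iξ − ν) · (1 − (iξ − ν)²)^{−1} · (c − 3k − (c − k)(iξ − ν)² + η²(iξ − ν)^{−2}) is strictly negative. -/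
set_option maxHeartbeats 1000000 in
/-- Negativity of the continuous spectrum of the transversely perturbed linearized
Camassa–Holm operator in `L²_ν`: for `k > 0`, `c > 3k`, `η ∈ ℝ`, and
`0 < ν < √((c-3k)/(c-k))`, the real part of the symbol `λ(ξ)` is strictly negative. -/
theorem perturbed_symbol_neg (k c η ν : ℝ) (hk : 0 < k) (hc : 3 * k < c)
    (hν : ν ∈ Set.Ioo (0 : ℝ) (Real.sqrt ((c - 3 * k) / (c - k)))) (ξ : ℝ) :
    ((Complex.I * (ξ : ℂ) - (ν : ℂ)) * (1 - (Complex.I * (ξ : ℂ) - (ν : ℂ)) ^ 2)⁻¹ *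
        ((c : ℂ) - 3 * (k : ℂ) - ((c : ℂ) - (k : ℂ)) * (Complex.I * (ξ : ℂ) - (ν : ℂ)) ^ 2 +
          (η : ℂ) ^ 2 * ((Complex.I * (ξ : ℂ) - (ν : ℂ)) ^ 2)⁻¹)).re < 0 := by
  obtain ⟨hν0, hν1⟩ := hν
  have hA0 : 0 < c - 3 * k := by linarith
  have hAB : c - 3 * k < c - k := by linarith
  have hB0 : (0:ℝ) < c - k := lt_trans hA0 hAB
  have hν2 : ν ^ 2 < (c - 3 * k) / (c - k) := (Real.lt_sqrt hν0.le).mp hν1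
  have hνBA : (c - k) * ν ^ 2 < c - 3 * k := by
    rw [lt_div_iff₀ hB0] at hν2; linarith
  have hν21 : ν ^ 2 < 1 := by
    have h1 : (c - 3 * k) / (c - k) < 1 := (div_lt_one hB0).mpr hAB
    linarith
  -- the real part as an explicit rational function
  have heq : ((Complex.I * (ξ : ℂ) - (ν : ℂ)) * (1 - (Complex.I * (ξ : ℂ) - (ν : ℂ)) ^ 2)⁻¹ *
        ((c : ℂ) - 3 * (k : ℂ) - ((c : ℂ) - (k : ℂ)) * (Complex.I * (ξ : ℂ) - (ν : ℂ)) ^ 2 +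
          (η : ℂ) ^ 2 * ((Complex.I * (ξ : ℂ) - (ν : ℂ)) ^ 2)⁻¹)).re
      = (-ν) * ((c - 3 * k) * (1 - ν ^ 2 - ξ ^ 2)
            + (c - k) * (3 * ξ ^ 2 - ν ^ 2 + (ν ^ 2 + ξ ^ 2) ^ 2))
          / ((1 - ν ^ 2 + ξ ^ 2) ^ 2 + 4 * ν ^ 2 * ξ ^ 2)
        + η ^ 2 * ν * (ν ^ 2 + ξ ^ 2) * (ν ^ 2 - 3 * ξ ^ 2 - 1)
          / ((ν ^ 2 + ξ ^ 2) ^ 2) / ((1 - ν ^ 2 + ξ ^ 2) ^ 2 + 4 * ν ^ 2 * ξ ^ 2) := by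
    simp only [pow_two, Complex.mul_re, Complex.mul_im, Complex.sub_re, Complex.sub_im,
      Complex.add_re, Complex.add_im, Complex.one_re, Complex.one_im, Complex.inv_re,
      Complex.inv_im, Complex.normSq_apply, Complex.ofReal_re, Complex.ofReal_im,
      Complex.I_re, Complex.I_im, Complex.re_ofNat, Complex.im_ofNat]
    ring_nf
  rw [heq]
  have hD0 : (0:ℝ) < (1 - ν ^ 2 + ξ ^ 2) ^ 2 + 4 * ν ^ 2 * ξ ^ 2 := by
    have h : 0 < 1 - ν ^ 2 + ξ ^ 2 := by nlinarith
    positivity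
  -- the bracket is positive
  have hbr : 0 < (c - 3 * k) * (1 - ν ^ 2 - ξ ^ 2)
      + (c - k) * (3 * ξ ^ 2 - ν ^ 2 + (ν ^ 2 + ξ ^ 2) ^ 2) := by
    have h1 : 0 < (1 - ν ^ 2) * ((c - 3 * k) - (c - k) * ν ^ 2) := by
      apply mul_pos <;> nlinarith
    have h2 : 0 ≤ (3 * (c - k) - (c - 3 * k)) * ξ ^ 2 := by nlinarith
    have h3 : 0 ≤ (c - k) * ξ ^ 2 * (2 * ν ^ 2 + ξ ^ 2) := by positivity
    nlinarith
  have t1 : (-ν) * ((c - 3 * k) * (1 - ν ^ 2 - ξ ^ 2)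
        + (c - k) * (3 * ξ ^ 2 - ν ^ 2 + (ν ^ 2 + ξ ^ 2) ^ 2))
      / ((1 - ν ^ 2 + ξ ^ 2) ^ 2 + 4 * ν ^ 2 * ξ ^ 2) < 0 := by
    apply div_neg_of_neg_of_pos _ hD0
    nlinarith
  have t2 : η ^ 2 * ν * (ν ^ 2 + ξ ^ 2) * (ν ^ 2 - 3 * ξ ^ 2 - 1)
      / ((ν ^ 2 + ξ ^ 2) ^ 2) / ((1 - ν ^ 2 + ξ ^ 2) ^ 2 + 4 * ν ^ 2 * ξ ^ 2) ≤ 0 := by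
    apply div_nonpos_of_nonpos_of_nonneg _ hD0.le
    apply div_nonpos_of_nonpos_of_nonneg _ (by positivity)
    have hpos : 0 ≤ η ^ 2 * ν * (ν ^ 2 + ξ ^ 2) * (1 + 3 * ξ ^ 2 - ν ^ 2) :=
      mul_nonneg (by positivity) (by nlinarith)
    calc η ^ 2 * ν * (ν ^ 2 + ξ ^ 2) * (ν ^ 2 - 3 * ξ ^ 2 - 1)
        = -(η ^ 2 * ν * (ν ^ 2 + ξ ^ 2) * (1 + 3 * ξ ^ 2 - ν ^ 2)) := by ring
      _ ≤ 0 := neg_nonpos.mpr hpos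
  linarith
end

section
/- Let k > 0, c > 3k, and ξ₀ := √((c − 3k)/(2k)). Define N(c) := 2k(2c − 5k)(ξ₀√(1 + ξ₀²) + arcsinh ξ₀) − 4k²ξ₀(1 + ξ₀²)^{3/2}, M(c) := 4k(ξ₀√(1 + ξ₀²) + arcsinh ξ₀), M'(c) := 2√((c − k)/(c − 3k)), and E'(c) := 2√((c − 3k)(c − k)). Then N(c) · M'(c) − 2 M(c) · E'(c) < 0. -/
/-!
Substituting `c = 3k + 2kξ²` (so `ξ = ξ₀`) turns both square roots in `M'` and `E'` into
multiples of `s = √(1 + ξ²)`, and the whole combination becomes `(4k²s/ξ) · g(ξ)` with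
`g(ξ) = (1 - 4ξ²)(ξs + arsinh ξ) - 2ξs³`. Using `s² = 1 + ξ²`,
`g(ξ) = (arsinh ξ - ξs) - 4ξ² arsinh ξ - 6ξ³s`, which is negative because
`0 < arsinh ξ < ξ ≤ ξs`.
-/

open Real

lemma Real.arsinh_lt_self {x : ℝ} (hx : 0 < x) : arsinh x < x := by
  rw [← sinh_lt_sinh, sinh_arsinh]
  exact self_lt_sinh_iff.mpr hx

noncomputable def reducedCombination (ξ : ℝ) : ℝ :=
  (1 - 4 * ξ ^ 2) * (ξ * √(1 + ξ ^ 2) + arsinh ξ) - 2 * ξ * √(1 + ξ ^ 2) ^ 3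

lemma reducedCombination_neg {ξ : ℝ} (hξ : 0 < ξ) : reducedCombination ξ < 0 := by
  set s := √(1 + ξ ^ 2)
  have hs_sq : s ^ 2 = 1 + ξ ^ 2 := sq_sqrt (by positivity)
  have hs_one : 1 ≤ s := one_le_sqrt.mpr (by nlinarith)
  have h_arsinh_pos : 0 < arsinh ξ := arsinh_pos_iff.mpr hξ
  have h_arsinh_lt : arsinh ξ < ξ * s :=
    (arsinh_lt_self hξ).trans_le (le_mul_of_one_le_right hξ.le hs_one)
  have h_eq : reducedCombination ξ =
      (arsinh ξ - ξ * s) - 4 * ξ ^ 2 * arsinh ξ - 6 * ξ ^ 3 * s := by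
    unfold reducedCombination
    linear_combination (-2 * ξ * s) * hs_sq
  rw [h_eq]
  have h_cube_pos : 0 < ξ ^ 3 * s := by positivity
  nlinarith [mul_pos (pow_pos hξ 2) h_arsinh_pos]

lemma sqrt_speed_ratio {k ξ : ℝ} (hk : 0 < k) (hξ : 0 < ξ) :
    √((3 * k + 2 * k * ξ ^ 2 - k) / (3 * k + 2 * k * ξ ^ 2 - 3 * k)) = √(1 + ξ ^ 2) / ξ := by
  rw [show (3 * k + 2 * k * ξ ^ 2 - k) / (3 * k + 2 * k * ξ ^ 2 - 3 * k) = (1 + ξ ^ 2) / ξ ^ 2 by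
      field_simp; ring, sqrt_div' _ (sq_nonneg ξ), sqrt_sq hξ.le]

lemma sqrt_speed_product {k ξ : ℝ} (hk : 0 < k) (hξ : 0 < ξ) :
    √((3 * k + 2 * k * ξ ^ 2 - 3 * k) * (3 * k + 2 * k * ξ ^ 2 - k)) =
      2 * k * ξ * √(1 + ξ ^ 2) := by
  rw [show (3 * k + 2 * k * ξ ^ 2 - 3 * k) * (3 * k + 2 * k * ξ ^ 2 - k) =
      (2 * k * ξ) ^ 2 * (1 + ξ ^ 2) by ring, sqrt_mul (by positivity), sqrt_sq (by positivity)]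

/-- Negativity of the combination determining the sign of the second Puiseux
coefficient `λ₂`: with `ξ₀ = √((c-3k)/(2k))`,
`N(c) M'(c) - 2 M(c) E'(c) < 0`, where `N(c) = ‖ψ‖²_{L²}`, `M(c) = M_{1D}(ψ)`,
`M'(c) = (d/dc)M_{1D}(ψ)` and `E'(c) = (d/dc)E_{1D}(ψ)` in closed form. -/
theorem puiseux_coefficient_neg (k c : ℝ) (hk : 0 < k) (hc : 3 * k < c) :
    (2 * k * (2 * c - 5 * k) *
          (Real.sqrt ((c - 3 * k) / (2 * k)) *
              Real.sqrt (1 + (Real.sqrt ((c - 3 * k) / (2 * k))) ^ 2) +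
            Real.arsinh (Real.sqrt ((c - 3 * k) / (2 * k)))) -
        4 * k ^ 2 * Real.sqrt ((c - 3 * k) / (2 * k)) *
          (Real.sqrt (1 + (Real.sqrt ((c - 3 * k) / (2 * k))) ^ 2)) ^ 3) *
        (2 * Real.sqrt ((c - k) / (c - 3 * k))) -
      2 * (4 * k * (Real.sqrt ((c - 3 * k) / (2 * k)) *
              Real.sqrt (1 + (Real.sqrt ((c - 3 * k) / (2 * k))) ^ 2) +
            Real.arsinh (Real.sqrt ((c - 3 * k) / (2 * k))))) *
        (2 * Real.sqrt ((c - 3 * k) * (c - k))) < 0 := by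
  obtain ⟨ξ, hξ, hξ_def, rfl⟩ :
      ∃ ξ, 0 < ξ ∧ √((c - 3 * k) / (2 * k)) = ξ ∧ c = 3 * k + 2 * k * ξ ^ 2 := by
    have h_pos : 0 < (c - 3 * k) / (2 * k) := div_pos (by linarith) (by positivity)
    refine ⟨_, sqrt_pos.mpr h_pos, rfl, ?_⟩
    rw [sq_sqrt h_pos.le]
    field_simp
    ring
  rw [hξ_def, sqrt_speed_ratio hk hξ, sqrt_speed_product hk hξ]
  calc _ = 4 * k ^ 2 * √(1 + ξ ^ 2) / ξ * reducedCombination ξ := by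
        unfold reducedCombination
        field_simp
        ring
    _ < 0 := mul_neg_of_pos_of_neg (by positivity) (reducedCombination_neg hξ)
end

section
/- Let k > 0, 0 < ρ < 1/√(2k), and ε > 0 with 2ε²ρ² < 1, and suppose β₀ := ρ [ 1 − 2kρ² − 2kε²ρ⁴/(1 − 2ε²ρ²) ] > 0. Then for all Ξ, Υ ∈ ℝ, the real part of Λ(Ξ) := (iΞ − ρ) · (1 − ε²(iΞ − ρ)²)^{−1} · (1 − (2k + ε²)(iΞ − ρ)² + Υ²(iΞ − ρ)^{−2}) satisfies −Re(Λ(Ξ)) ≥ β₀. -/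
/-!
With `ν = iΞ - ρ` and `w = 1 - ε²ν²`, the identity `1 - (2k + ε²)ν² = w - 2kν²` splits the
symbol as `Λ = ν - 2k ν³/w + Υ²/(νw)`. The transverse term has `Re (νw)⁻¹ ≤ 0` because
`Re (νw) = -ρ(1 - ε²ρ² + 3ε²Ξ²) ≤ 0`, so it only helps, uniformly in `Υ`. The dispersive
term satisfies `Re (ν³/w) ≥ -ρ³/(1 - ε²ρ²)`, its value at `Ξ = 0`, by an explicit polynomial
certificate. Hence `-Re Λ ≥ ρ - 2kρ³/(1 - ε²ρ²) ≥ β₀`.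
-/

open Complex

theorem re_one_sub_sq_mul_sq (z : ℂ) (ε : ℝ) :
    (1 - (ε : ℂ) ^ 2 * z ^ 2).re = 1 - ε ^ 2 * z.re ^ 2 + ε ^ 2 * z.im ^ 2 := by
  rw [← ofReal_pow, sub_re, re_ofReal_mul, one_re, sq z, mul_re]
  ring

theorem im_one_sub_sq_mul_sq (z : ℂ) (ε : ℝ) :
    (1 - (ε : ℂ) ^ 2 * z ^ 2).im = -(2 * ε ^ 2 * z.re * z.im) := by
  rw [← ofReal_pow, sub_im, im_ofReal_mul, one_im, sq z, mul_im]
  ring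

section

variable {z : ℂ} {ε : ℝ}

theorem re_one_sub_sq_mul_sq_pos (hs : ε ^ 2 * z.re ^ 2 < 1) :
    0 < (1 - (ε : ℂ) ^ 2 * z ^ 2).re := by
  rw [re_one_sub_sq_mul_sq]
  nlinarith [mul_nonneg (sq_nonneg ε) (sq_nonneg z.im)]

theorem re_inv_mul_one_sub_sq_mul_sq_nonpos (hre : z.re ≤ 0) (hs : ε ^ 2 * z.re ^ 2 ≤ 1) :
    (z * (1 - (ε : ℂ) ^ 2 * z ^ 2))⁻¹.re ≤ 0 := by
  have hfactor : (z * (1 - (ε : ℂ) ^ 2 * z ^ 2)).re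
      = z.re * (1 - ε ^ 2 * z.re ^ 2 + 3 * (ε ^ 2 * z.im ^ 2)) := by
    rw [mul_re, re_one_sub_sq_mul_sq, im_one_sub_sq_mul_sq]
    ring
  rw [inv_re, hfactor]
  refine div_nonpos_of_nonpos_of_nonneg (mul_nonpos_of_nonpos_of_nonneg hre ?_) (normSq_nonneg _)
  nlinarith [mul_nonneg (sq_nonneg ε) (sq_nonneg z.im)]

theorem div_one_sub_sq_mul_sq_le_re_cube_div (hre : z.re ≤ 0) (hs : ε ^ 2 * z.re ^ 2 < 1) :
    z.re ^ 3 / (1 - ε ^ 2 * z.re ^ 2) ≤ (z ^ 3 / (1 - (ε : ℂ) ^ 2 * z ^ 2)).re := by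
  have hz3re : (z ^ 3).re = z.re ^ 3 - 3 * z.re * z.im ^ 2 := by
    simp only [pow_succ, pow_zero, one_mul, mul_re, mul_im]
    ring
  have hz3im : (z ^ 3).im = 3 * z.re ^ 2 * z.im - z.im ^ 3 := by
    simp only [pow_succ, pow_zero, one_mul, mul_re, mul_im]
    ring
  have hwre := re_one_sub_sq_mul_sq_pos hs
  rw [re_one_sub_sq_mul_sq] at hwre
  set x := z.re
  set y := z.im
  set s := ε ^ 2 * x ^ 2
  set t := ε ^ 2 * y ^ 2
  rw [div_re, normSq_apply, re_one_sub_sq_mul_sq, im_one_sub_sq_mul_sq, hz3re, hz3im, ← add_div,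
    div_le_div_iff₀ (by linarith)
      (add_pos_of_pos_of_nonneg (mul_pos hwre hwre) (mul_self_nonneg _))]
  have hs0 : 0 ≤ s := by positivity
  have hgap : 0 ≤ x ^ 2 * t * (1 + 3 * s + t) + 3 * y ^ 2 * (1 - s) ^ 2 + y ^ 2 * (1 - s) * t
      + 6 * s * y ^ 2 * (1 - s) := by
    have : 0 < 1 - s := by linarith
    positivity
  -- after clearing denominators, the difference of the two sides is exactly `(-x) * hgap`
  nlinarith [mul_nonneg (neg_nonneg.2 hre) hgap]

end

theorem symbol_eq_sub_add (ν : ℂ) (k ε Υ : ℝ) (hw : 1 - (ε : ℂ) ^ 2 * ν ^ 2 ≠ 0) :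
    ν * (1 - (ε : ℂ) ^ 2 * ν ^ 2)⁻¹ *
        (1 - ((2 * k : ℝ) + ε ^ 2 : ℝ) * ν ^ 2 + (Υ : ℂ) ^ 2 * (ν ^ 2)⁻¹) =
      ν - (2 * k : ℝ) * (ν ^ 3 / (1 - (ε : ℂ) ^ 2 * ν ^ 2))
        + (Υ ^ 2 : ℝ) * (ν * (1 - (ε : ℂ) ^ 2 * ν ^ 2))⁻¹ := by
  rcases eq_or_ne ν 0 with rfl | hν
  · simp
  have hw' : 1 - ν ^ 2 * (ε : ℂ) ^ 2 ≠ 0 := by rwa [mul_comm]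
  push_cast
  field_simp
  ring

/-- The constant `β₀` of the paper. -/
noncomputable def kpSpectralGap (k ρ ε : ℝ) : ℝ :=
  ρ * (1 - 2 * k * ρ ^ 2 - 2 * k * ε ^ 2 * ρ ^ 4 / (1 - 2 * ε ^ 2 * ρ ^ 2))

theorem one_div_one_sub_le_one_add_div_one_sub_two_mul {a : ℝ} (ha : 2 * a < 1) :
    1 / (1 - a) ≤ 1 + a / (1 - 2 * a) := by
  have h2a : 0 < 1 - 2 * a := by linarith
  have hsum : 1 + a / (1 - 2 * a) = (1 - a) / (1 - 2 * a) := by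
    rw [eq_div_iff h2a.ne', add_mul, div_mul_cancel₀ _ h2a.ne']
    ring
  rw [hsum, div_le_div_iff₀ (by linarith) h2a]
  nlinarith [sq_nonneg a]

theorem kpSpectralGap_le {k ρ ε : ℝ} (hk : 0 ≤ k) (hρ : 0 ≤ ρ)
    (hsmall : 2 * ε ^ 2 * ρ ^ 2 < 1) :
    kpSpectralGap k ρ ε ≤ ρ - 2 * k * (ρ ^ 3 / (1 - ε ^ 2 * ρ ^ 2)) :=
  calc kpSpectralGap k ρ ε
      = ρ - 2 * k * ρ ^ 3 * (1 + ε ^ 2 * ρ ^ 2 / (1 - 2 * (ε ^ 2 * ρ ^ 2))) := by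
        unfold kpSpectralGap
        ring
    _ ≤ ρ - 2 * k * ρ ^ 3 * (1 / (1 - ε ^ 2 * ρ ^ 2)) := by
        gcongr
        exact one_div_one_sub_le_one_add_div_one_sub_two_mul (by linarith)
    _ = ρ - 2 * k * (ρ ^ 3 / (1 - ε ^ 2 * ρ ^ 2)) := by ring

theorem kp_symbol_uniform_bound_general (k ρ ε : ℝ) (hk : 0 < k) (hρ0 : 0 < ρ)
    (hsmall : 2 * ε ^ 2 * ρ ^ 2 < 1)
    (Ξ Υ : ℝ) :
    ρ * (1 - 2 * k * ρ ^ 2 - 2 * k * ε ^ 2 * ρ ^ 4 / (1 - 2 * ε ^ 2 * ρ ^ 2)) ≤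
      -((Complex.I * (Ξ : ℂ) - (ρ : ℂ)) *
          (1 - (ε : ℂ) ^ 2 * (Complex.I * (Ξ : ℂ) - (ρ : ℂ)) ^ 2)⁻¹ *
          (1 - ((2 * k : ℝ) + ε ^ 2 : ℝ) * (Complex.I * (Ξ : ℂ) - (ρ : ℂ)) ^ 2 +
            (Υ : ℂ) ^ 2 * ((Complex.I * (Ξ : ℂ) - (ρ : ℂ)) ^ 2)⁻¹)).re := by
  set ν : ℂ := Complex.I * Ξ - ρ
  have hνre : ν.re = -ρ := by simp [ν]
  have hs : ε ^ 2 * ν.re ^ 2 < 1 := by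
    rw [hνre]
    nlinarith [sq_nonneg (ε * ρ)]
  have hw : 1 - (ε : ℂ) ^ 2 * ν ^ 2 ≠ 0 := fun h ↦
    (re_one_sub_sq_mul_sq_pos hs).ne' (by rw [h, zero_re])
  have hνre_nonpos : ν.re ≤ 0 := by rw [hνre]; linarith
  have hcube : -(ρ ^ 3 / (1 - ε ^ 2 * ρ ^ 2)) ≤ (ν ^ 3 / (1 - (ε : ℂ) ^ 2 * ν ^ 2)).re := by
    have h := div_one_sub_sq_mul_sq_le_re_cube_div hνre_nonpos hs
    rw [hνre] at h
    convert h using 1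
    ring
  have hinv := re_inv_mul_one_sub_sq_mul_sq_nonpos hνre_nonpos hs.le
  rw [symbol_eq_sub_add ν k ε Υ hw, add_re, sub_re, re_ofReal_mul, re_ofReal_mul, hνre]
  show kpSpectralGap k ρ ε ≤ _
  linarith [kpSpectralGap_le hk.le hρ0.le hsmall,
    mul_le_mul_of_nonneg_left hcube (by positivity : 0 ≤ 2 * k),
    mul_nonpos_of_nonneg_of_nonpos (sq_nonneg Υ) hinv]

/-- Uniform spectral bound for the CH-KP symbol in the KP-II scaling: if
`β₀ = ρ(1 - 2kρ² - 2kε²ρ⁴/(1 - 2ε²ρ²)) > 0`, then `-Re(Λ(Ξ)) ≥ β₀` uniformly in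
`Ξ` and the transverse wave number `Υ`. -/
theorem kp_symbol_uniform_bound (k ρ ε : ℝ) (hk : 0 < k) (hρ0 : 0 < ρ)
    (hρ1 : ρ < 1 / Real.sqrt (2 * k)) (hε : 0 < ε) (hsmall : 2 * ε ^ 2 * ρ ^ 2 < 1)
    (hβ : 0 < ρ * (1 - 2 * k * ρ ^ 2 - 2 * k * ε ^ 2 * ρ ^ 4 / (1 - 2 * ε ^ 2 * ρ ^ 2)))
    (Ξ Υ : ℝ) :
    ρ * (1 - 2 * k * ρ ^ 2 - 2 * k * ε ^ 2 * ρ ^ 4 / (1 - 2 * ε ^ 2 * ρ ^ 2)) ≤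
      -((Complex.I * (Ξ : ℂ) - (ρ : ℂ)) *
          (1 - (ε : ℂ) ^ 2 * (Complex.I * (Ξ : ℂ) - (ρ : ℂ)) ^ 2)⁻¹ *
          (1 - ((2 * k : ℝ) + ε ^ 2 : ℝ) * (Complex.I * (Ξ : ℂ) - (ρ : ℂ)) ^ 2 +
            (Υ : ℂ) ^ 2 * ((Complex.I * (Ξ : ℂ) - (ρ : ℂ)) ^ 2)⁻¹)).re :=
  kp_symbol_uniform_bound_general k ρ ε hk hρ0 hsmall Ξ Υ
end
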